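/- For all positive reals a and b, 5·S + P2 + G − 7·A ≥ 0, i.e. A + S − G ≤ 6·S + P2 − 6·A, where S = √((a²+b²)/2), P2 = (a^{-1}+b^{-1})/(a^{-2}+b^{-2}) = ab(a+b)/(a²+b²), G = √(ab), and A = (a+b)/2. -/

import Mathlib

/-!
With `A`, `G`, `S` the arithmetic, geometric and quadratic means we have `S² + G² = 2A²`,
`G ≤ A ≤ S` and `P2 = A G² / S²`. Clearing the denominator `S²` turns the claim into a cubic
inequality in `A`, `S`, `G`, which holds under that quadratic constraint.
-/

theorem sqrt_mul_le_add_div_two {a b : ℝ} (h : 0 ≤ a + b) : √(a * b) ≤ (a + b) / 2 :=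
  (Real.sqrt_le_left (by linarith)).2 (by nlinarith [sq_nonneg (a - b)])

theorem add_div_two_le_sqrt_sq_add_sq_div_two (a b : ℝ) : (a + b) / 2 ≤ √((a ^ 2 + b ^ 2) / 2) :=
  Real.le_sqrt_of_sq_le (by nlinarith [sq_nonneg (a - b)])

theorem mul_mul_add_div_sq_add_sq_eq (a b : ℝ) :
    a * b * (a + b) / (a ^ 2 + b ^ 2) = (a + b) / 2 * (a * b) / ((a ^ 2 + b ^ 2) / 2) := by
  rw [div_div_eq_mul_div]
  ring

/-- With `x = S - A` and `y = A - G`, the constraint reads `2A(y - x) = x² + y²`, which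
pins `y` between `x` and `2x + x²/A`; on that range the cubic is nonnegative. -/
theorem seven_mul_mul_sq_le_of_sq_add_sq_eq {A S G : ℝ} (hA : 0 < A) (hG : 0 ≤ G) (hGA : G ≤ A)
    (hAS : A ≤ S) (h : S ^ 2 + G ^ 2 = 2 * A ^ 2) :
    7 * A * S ^ 2 ≤ 5 * S ^ 3 + G * S ^ 2 + A * G ^ 2 := by
  nlinarith [sq_nonneg (S + G - 2 * A), mul_nonneg (sub_nonneg.2 hAS) (sq_nonneg (A - G)),
    mul_nonneg (sub_nonneg.2 hGA) (sq_nonneg (S - A))]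

theorem seven_mul_le_of_sq_add_sq_eq {A S G : ℝ} (hA : 0 < A) (hG : 0 ≤ G) (hGA : G ≤ A)
    (hAS : A ≤ S) (h : S ^ 2 + G ^ 2 = 2 * A ^ 2) : 7 * A ≤ 5 * S + G + A * G ^ 2 / S ^ 2 := by
  have hS : 0 < S := hA.trans_le hAS
  have hcubic := seven_mul_mul_sq_le_of_sq_add_sq_eq hA hG hGA hAS h
  have hdiv : 5 * S + G + A * G ^ 2 / S ^ 2
      = 7 * A + (5 * S ^ 3 + G * S ^ 2 + A * G ^ 2 - 7 * A * S ^ 2) / S ^ 2 := by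
    field_simp
    ring
  rw [hdiv]
  exact le_add_of_nonneg_right (div_nonneg (by linarith) (by positivity))

theorem stmt_18 (a b : ℝ) (ha : 0 < a) (hb : 0 < b) :
    let S := Real.sqrt ((a^2+b^2)/2)
    let P2 := a*b*(a+b)/(a^2+b^2)
    let G := Real.sqrt (a*b)
    let A := (a+b)/2
    5*S + P2 + G - 7*A ≥ 0 := by
  intro S P2 G A
  have hS : S ^ 2 = (a ^ 2 + b ^ 2) / 2 := Real.sq_sqrt (by positivity)
  have hG : G ^ 2 = a * b := Real.sq_sqrt (by positivity)
  have hP : P2 = A * G ^ 2 / S ^ 2 := by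
    rw [hS, hG]
    exact mul_mul_add_div_sq_add_sq_eq a b
  have hmain : 7 * A ≤ 5 * S + G + A * G ^ 2 / S ^ 2 :=
    seven_mul_le_of_sq_add_sq_eq (by positivity) (Real.sqrt_nonneg _)
      (sqrt_mul_le_add_div_two (by positivity)) (add_div_two_le_sqrt_sq_add_sq_div_two a b)
      (by rw [hS, hG]; ring)
  linarith
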